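/- arXiv:2307.13587 — 2 statements merged into one kernel-verified Lean document; each statement's English description precedes it below -/
import Mathlib

section
/- Let σ, ρ > 0 and N ≥ 1. The vector b = (b_0,…,b_{N-1}) ∈ ℂ^N given by b_k = N!/(k!((N-k)/2)!) · ((ρ+σ)/(2σ(2ρ+σ)))^{(N-k)/2} if N-k is even and b_k = 0 if N-k is odd, minimizes the functional F_ρ: for every b̃ ∈ ℂ^N one has F_ρ(b) ≤ F_ρ(b̃). -/
open Real MeasureTheory Finset Nat

/-- Physicist's Hermite polynomial via the Rodrigues formula. -/
noncomputable def hermiteH (n : ℕ) (t : ℝ) : ℝ :=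
  (-1 : ℝ) ^ n * Real.exp (t ^ 2) * iteratedDeriv n (fun s => Real.exp (-s ^ 2)) t

/-- The functional `F_ρ(b̃) = ∫ |Σ_{k=0}^{N} b̃_k (d^k/dt^k) e^{-t²/(2σ)}|² e^{-t²/(2ρ)} dt`
with `b̃_N = 1`. -/
noncomputable def Frho (σ ρ : ℝ) (N : ℕ) (b : Fin N → ℂ) : ℝ :=
  ∫ t : ℝ, ‖∑ k ∈ Finset.range (N + 1),
      (if h : k < N then b ⟨k, h⟩ else 1) *
        (iteratedDeriv k (fun s : ℝ => Real.exp (-s ^ 2 / (2 * σ))) t : ℂ)‖ ^ 2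
    * Real.exp (-t ^ 2 / (2 * ρ))

/-- The explicit coefficients `b_k`. -/
noncomputable def bcoef (σ ρ : ℝ) (N k : ℕ) : ℝ :=
  if (N - k) % 2 = 0 then
    (N ! : ℝ) / ((k ! : ℝ) * (((N - k) / 2)! : ℝ)) *
      ((ρ + σ) / (2 * σ * (2 * ρ + σ))) ^ ((N - k) / 2)
  else 0

open Polynomial Filter

/-- The polynomial `Q c n` with `d^n/dt^n exp(-c t²) = (Q c n).eval t * exp(-c t²)`. -/
noncomputable def Qp (c : ℝ) : ℕ → Polynomial ℝ
  | 0 => 1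
  | n+1 => Polynomial.derivative (Qp c n) - Polynomial.C (2*c) * Polynomial.X * Qp c n

lemma hasDerivAt_gauss (c t : ℝ) :
    HasDerivAt (fun s : ℝ => Real.exp (-(c * s^2))) (-(c * (2*t)) * Real.exp (-(c*t^2))) t := by
  have h1 : HasDerivAt (fun s : ℝ => -(c * s^2)) (-(c * (2*t))) t := by
    simpa using (((hasDerivAt_pow 2 t)).const_mul c).fun_neg
  simpa [mul_comm] using h1.exp

lemma hasDerivAt_poly_gauss (c t : ℝ) (P : Polynomial ℝ) :
    HasDerivAt (fun s : ℝ => P.eval s * Real.exp (-(c * s^2)))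
      ((Polynomial.derivative P - Polynomial.C (2*c) * Polynomial.X * P).eval t
        * Real.exp (-(c*t^2))) t := by
  have := (P.hasDerivAt t).fun_mul (hasDerivAt_gauss c t)
  refine this.congr_deriv ?_
  simp only [Polynomial.eval_sub, Polynomial.eval_mul, Polynomial.eval_C, Polynomial.eval_X]
  ring

lemma iteratedDeriv_gauss (c : ℝ) (n : ℕ) :
    iteratedDeriv n (fun s : ℝ => Real.exp (-(c * s^2)))
      = fun t => (Qp c n).eval t * Real.exp (-(c * t^2)) := by
  induction n with
  | zero => simp [Qp]
  | succ n ih =>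
    rw [iteratedDeriv_succ, ih]
    funext t
    exact ((hasDerivAt_poly_gauss c t (Qp c n)).deriv)

lemma Qp_derivative (c : ℝ) (n : ℕ) :
    Polynomial.derivative (Qp c (n+1)) = Polynomial.C (-(2*c) * (n+1)) * Qp c n := by
  induction n with
  | zero =>
    simp [Qp]
  | succ n ih =>
    have hrec : Polynomial.derivative (Qp c n)
        = Qp c (n+1) + Polynomial.C (2*c) * Polynomial.X * Qp c n := by
      rw [Qp]; ring
    show Polynomial.derivative (Qp c (n+1+1)) = _
    rw [Qp, map_sub, ih]
    rw [Polynomial.derivative_mul, Polynomial.derivative_mul, Polynomial.derivative_mul]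
    simp only [Polynomial.derivative_C, Polynomial.derivative_X, zero_mul, mul_one, zero_add]
    rw [hrec, ih]
    push_cast
    simp only [map_sub, map_add, map_mul, map_neg, map_one, map_ofNat]
    ring

lemma Qp_rec (c : ℝ) (n : ℕ) :
    Qp c (n+2) = Polynomial.C (-(2*c)) * (Polynomial.X * Qp c (n+1)
      + Polynomial.C ((n:ℝ)+1) * Qp c n) := by
  show Qp c (n+1+1) = _
  rw [Qp, Qp_derivative]
  push_cast
  simp only [map_sub, map_add, map_mul, map_neg, map_one, map_ofNat]
  ring

lemma Qp_mulX (c : ℝ) (k : ℕ) :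
    Polynomial.C (-(2*c)) * Polynomial.X * Qp c k
      = Qp c (k+1) + Polynomial.C (2*c*k) * Qp c (k-1) := by
  cases k with
  | zero =>
    have h1 : Qp c 1 = -(Polynomial.C (2*c) * Polynomial.X) := by
      rw [Qp]; simp [Qp]
    rw [h1]
    simp only [Nat.cast_zero, mul_zero, map_zero, zero_mul, add_zero]
    simp only [Qp]
    simp only [map_neg, map_mul, map_ofNat]
    ring
  | succ n =>
    rw [Qp_rec c n]
    have h2 : n + 1 - 1 = n := rfl
    rw [h2]
    push_cast
    simp only [map_sub, map_add, map_mul, map_neg, map_one, map_ofNat]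
    ring

lemma Qp_natDegree_le (c : ℝ) (n : ℕ) : (Qp c n).natDegree ≤ n := by
  induction n with
  | zero => simp [Qp]
  | succ n ih =>
    rw [Qp]
    refine le_trans (Polynomial.natDegree_sub_le _ _) (max_le ?_ ?_)
    · exact le_trans (Polynomial.natDegree_derivative_le _) (by omega)
    · refine le_trans (Polynomial.natDegree_mul_le) ?_
      have h1 : (Polynomial.C (2*c) * Polynomial.X : Polynomial ℝ).natDegree ≤ 1 :=
        le_trans (Polynomial.natDegree_C_mul_le _ _) Polynomial.natDegree_X_le
      omega

section Part2
variable {b : ℝ}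

lemma integrable_pow_gauss (hb : 0 < b) (n : ℕ) :
    Integrable (fun x : ℝ => x ^ n * Real.exp (-(b * x^2))) := by
  have hmeas : AEStronglyMeasurable (fun x : ℝ => x ^ n * Real.exp (-(b * x^2))) volume := by
    exact ((continuous_pow n).mul ((continuous_const.mul (continuous_pow 2)).neg.rexp)).aestronglyMeasurable
  have hC : (0:ℝ) < 1 + (n ! : ℝ) * (2/b)^n := by positivity
  refine Integrable.mono' ((integrable_exp_neg_mul_sq (by linarith : (0:ℝ) < b/2)).const_mul
    (1 + (n ! : ℝ) * (2/b)^n)) hmeas ?_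
  filter_upwards with x
  rw [norm_mul, Real.norm_eq_abs, Real.norm_eq_abs, abs_pow, Real.abs_exp]
  have hexp : Real.exp (-(b*x^2)) = Real.exp (-(b/2*x^2)) * Real.exp (-(b/2*x^2)) := by
    rw [← Real.exp_add]; ring_nf
  rw [hexp, ← mul_assoc]
  have key : |x| ^ n * Real.exp (-(b/2*x^2)) ≤ 1 + (n ! : ℝ) * (2/b)^n := by
    rcases le_or_gt (|x|) 1 with h | h
    · have h1 : |x| ^ n ≤ 1 := pow_le_one₀ (abs_nonneg x) h
      have h2 : Real.exp (-(b/2*x^2)) ≤ 1 := by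
        rw [Real.exp_le_one_iff]; nlinarith [sq_nonneg x]
      nlinarith [pow_nonneg (abs_nonneg x) n, Real.exp_pos (-(b/2*x^2)),
        mul_nonneg (by positivity : (0:ℝ) ≤ (n ! : ℝ)) (by positivity : (0:ℝ) ≤ (2/b)^n)]
    · -- |x| ≥ 1 : |x|^n ≤ (x²)^n ≤ n! (2/b)^n exp((b/2)x²)
      have hx2 : (1:ℝ) ≤ x^2 := by nlinarith [sq_abs x, abs_nonneg x]
      have h1 : |x| ^ n ≤ (x^2) ^ n := by
        apply pow_le_pow_left₀ (abs_nonneg x)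
        nlinarith [abs_nonneg x, sq_abs x]
      have h2 : (b/2*x^2)^n / (n !) ≤ Real.exp (b/2*x^2) := by
        calc (b/2*x^2)^n / (n !) ≤ ∑ i ∈ Finset.range (n+1), (b/2*x^2)^i / (i !) := by
              exact Finset.single_le_sum (f := fun i => (b/2*x^2)^i / (i ! : ℝ))
                (fun i _ => by positivity) (Finset.self_mem_range_succ n)
          _ ≤ Real.exp (b/2*x^2) := Real.sum_le_exp_of_nonneg (by positivity) _
      have h3 : (x^2)^n ≤ (n ! : ℝ) * (2/b)^n * Real.exp (b/2*x^2) := by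
        have hb2 : (0:ℝ) < b/2 := by linarith
        have := mul_le_mul_of_nonneg_left h2 (by positivity : (0:ℝ) ≤ (n ! : ℝ) * (2/b)^n)
        calc (x^2)^n = (n ! : ℝ) * (2/b)^n * ((b/2*x^2)^n / (n !)) := by
              rw [mul_pow, div_pow, div_pow]
              field_simp
          _ ≤ (n ! : ℝ) * (2/b)^n * Real.exp (b/2*x^2) := this
      have h4 : |x|^n * Real.exp (-(b/2*x^2)) ≤ (n ! : ℝ) * (2/b)^n := by
        rw [Real.exp_neg]
        have hE := Real.exp_pos (b/2*x^2)
        calc |x|^n * (Real.exp (b/2*x^2))⁻¹ ≤ (x^2)^n * (Real.exp (b/2*x^2))⁻¹ := by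
              apply mul_le_mul_of_nonneg_right h1 (by positivity)
          _ ≤ ((n ! : ℝ) * (2/b)^n * Real.exp (b/2*x^2)) * (Real.exp (b/2*x^2))⁻¹ := by
              apply mul_le_mul_of_nonneg_right h3 (by positivity)
          _ = (n ! : ℝ) * (2/b)^n := by field_simp
      linarith [Real.exp_pos (-(b/2*x^2))]
  calc |x| ^ n * Real.exp (-(b/2*x^2)) * Real.exp (-(b/2*x^2))
      ≤ (1 + (n ! : ℝ) * (2/b)^n) * Real.exp (-(b/2*x^2)) := by
        apply mul_le_mul_of_nonneg_right key (Real.exp_pos _).le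
    _ = (1 + (n ! : ℝ) * (2/b)^n) * Real.exp (-(b/2) * x^2) := by rw [neg_mul]

lemma integrable_poly_gauss (hb : 0 < b) (P : Polynomial ℝ) :
    Integrable (fun x : ℝ => P.eval x * Real.exp (-(b * x^2))) := by
  have : (fun x : ℝ => P.eval x * Real.exp (-(b * x^2)))
      = fun x => ∑ i ∈ Finset.range (P.natDegree + 1),
          P.coeff i * (x ^ i * Real.exp (-(b * x^2))) := by
    funext x
    rw [Polynomial.eval_eq_sum_range, Finset.sum_mul]
    simp [mul_assoc]
  rw [this]
  exact integrable_finset_sum _ (fun i _ => (integrable_pow_gauss hb i).const_mul _)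

lemma tendsto_pow_gauss_atTop (hb : 0 < b) (n : ℕ) :
    Tendsto (fun x : ℝ => x ^ n * Real.exp (-(b * x^2))) atTop (nhds 0) := by
  have h1 : (fun x : ℝ => x ^ (n:ℝ) * Real.exp (-b * x^2)) =o[atTop]
      fun x : ℝ => Real.exp (-(1/2) * x) := rpow_mul_exp_neg_mul_sq_isLittleO_exp_neg hb n
  have h2 : Tendsto (fun x : ℝ => Real.exp (-(1/2) * x)) atTop (nhds 0) := by
    apply Real.tendsto_exp_atBot.comp
    exact (tendsto_const_mul_atBot_of_neg (by norm_num)).mpr tendsto_id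
  have h3 : Tendsto (fun x : ℝ => x ^ (n:ℝ) * Real.exp (-b * x^2)) atTop (nhds 0) :=
    h1.isBigO.trans_tendsto h2
  apply h3.congr'
  filter_upwards [eventually_gt_atTop (0:ℝ)] with x hx
  rw [Real.rpow_natCast, neg_mul]

lemma tendsto_poly_gauss_atTop (hb : 0 < b) (P : Polynomial ℝ) :
    Tendsto (fun x : ℝ => P.eval x * Real.exp (-(b * x^2))) atTop (nhds 0) := by
  have : (fun x : ℝ => P.eval x * Real.exp (-(b * x^2)))
      = fun x => ∑ i ∈ Finset.range (P.natDegree + 1),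
          P.coeff i * (x ^ i * Real.exp (-(b * x^2))) := by
    funext x
    rw [Polynomial.eval_eq_sum_range, Finset.sum_mul]
    simp [mul_assoc]
  rw [this]
  have : Tendsto (fun x : ℝ => ∑ i ∈ Finset.range (P.natDegree + 1),
      P.coeff i * (x ^ i * Real.exp (-(b * x^2)))) atTop
      (nhds (∑ i ∈ Finset.range (P.natDegree + 1), P.coeff i * 0)) := by
    apply tendsto_finset_sum
    intro i _
    exact (tendsto_pow_gauss_atTop hb i).const_mul _
  simpa using this

lemma tendsto_poly_gauss_atBot (hb : 0 < b) (P : Polynomial ℝ) :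
    Tendsto (fun x : ℝ => P.eval x * Real.exp (-(b * x^2))) atBot (nhds 0) := by
  have key := tendsto_poly_gauss_atTop hb (P.comp (-Polynomial.X))
  have : (fun x : ℝ => P.eval x * Real.exp (-(b * x^2)))
      = (fun y : ℝ => (P.comp (-Polynomial.X)).eval y * Real.exp (-(b * y^2))) ∘ (fun x => -x) := by
    funext x
    simp [Function.comp, Polynomial.eval_comp]
  rw [this]
  exact key.comp tendsto_neg_atBot_atTop

/-- FTC on ℝ : the integral of a derivative vanishing at ±∞ is zero. -/
lemma integral_deriv_zero {F f : ℝ → ℝ} (hF : ∀ t, HasDerivAt F (f t) t)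
    (hf : Integrable f) (hbot : Tendsto F atBot (nhds 0)) (htop : Tendsto F atTop (nhds 0)) :
    ∫ t, f t = 0 := by
  have h1 : ∫ t in Set.Iic (0:ℝ), f t = F 0 - 0 :=
    integral_Iic_of_hasDerivAt_of_tendsto' (fun x _ => hF x) hf.integrableOn hbot
  have h2 : ∫ t in Set.Ioi (0:ℝ), f t = 0 - F 0 :=
    integral_Ioi_of_hasDerivAt_of_tendsto' (fun x _ => hF x) hf.integrableOn htop
  rw [← intervalIntegral.integral_Iic_add_Ioi hf.integrableOn hf.integrableOn, h1, h2]
  ring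
end Part2

section Part3
variable {a : ℝ}

lemma integrable_pow_mul_poly_gauss (hb : 0 < a) (j : ℕ) (P : Polynomial ℝ) :
    Integrable (fun t : ℝ => t^j * (P.eval t * Real.exp (-(a * t^2)))) := by
  have := integrable_poly_gauss hb (Polynomial.X^j * P)
  simpa [mul_assoc] using this

lemma Qp_succ_eq (c : ℝ) (n : ℕ) : Qp c (n+1)
    = Polynomial.derivative (Qp c n) - Polynomial.C (2*c) * Polynomial.X * Qp c n := rfl

lemma integral_pow_mul_iteratedDeriv_gauss (ha : 0 < a) :
    ∀ j n : ℕ, j < n →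
      ∫ t : ℝ, t^j * iteratedDeriv n (fun s : ℝ => Real.exp (-(a * s^2))) t = 0 := by
  intro j
  induction j with
  | zero =>
    rintro (_ | m) hn
    · omega
    · rw [iteratedDeriv_gauss]
      simp only [pow_zero, one_mul]
      apply integral_deriv_zero (F := fun t => (Qp a m).eval t * Real.exp (-(a * t^2)))
      · intro t
        have := hasDerivAt_poly_gauss a t (Qp a m)
        rwa [← Qp_succ_eq] at this
      · exact integrable_poly_gauss ha _
      · exact tendsto_poly_gauss_atBot ha _
      · exact tendsto_poly_gauss_atTop ha _
  | succ j ih =>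
    rintro (_ | m) hn
    · omega
    · -- m > j
      have hjm : j < m := by omega
      have hder : ∀ t : ℝ, HasDerivAt
          (fun s : ℝ => (Polynomial.X^(j+1) * Qp a m).eval s * Real.exp (-(a * s^2)))
          (((j:ℝ)+1) * (t^j * ((Qp a m).eval t * Real.exp (-(a * t^2))))
            + t^(j+1) * ((Qp a (m+1)).eval t * Real.exp (-(a * t^2)))) t := by
        intro t
        have h := hasDerivAt_poly_gauss a t (Polynomial.X^(j+1) * Qp a m)
        convert h using 1
        have hD : Polynomial.derivative (Polynomial.X^(j+1) * Qp a m)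
              - Polynomial.C (2*a) * Polynomial.X * (Polynomial.X^(j+1) * Qp a m)
            = Polynomial.C ((j:ℝ)+1) * Polynomial.X^j * Qp a m
              + Polynomial.X^(j+1) * Qp a (m+1) := by
          rw [Qp_succ_eq]
          rw [Polynomial.derivative_mul, Polynomial.derivative_X_pow]
          push_cast
          ring
        rw [hD]
        simp only [Polynomial.eval_add, Polynomial.eval_mul, Polynomial.eval_pow,
          Polynomial.eval_C, Polynomial.eval_X]
        ring
      have hint : ∫ t : ℝ, (((j:ℝ)+1) * (t^j * ((Qp a m).eval t * Real.exp (-(a * t^2))))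
            + t^(j+1) * ((Qp a (m+1)).eval t * Real.exp (-(a * t^2)))) = 0 := by
        apply integral_deriv_zero hder
        · apply Integrable.add
          · exact (integrable_pow_mul_poly_gauss ha j _).const_mul _
          · exact integrable_pow_mul_poly_gauss ha (j+1) _
        · have := tendsto_poly_gauss_atBot ha (Polynomial.X^(j+1) * Qp a m)
          simpa [mul_assoc] using this
        · have := tendsto_poly_gauss_atTop ha (Polynomial.X^(j+1) * Qp a m)
          simpa [mul_assoc] using this
      rw [integral_add ((integrable_pow_mul_poly_gauss ha j _).const_mul _)
        (integrable_pow_mul_poly_gauss ha (j+1) _)] at hint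
      rw [MeasureTheory.integral_const_mul] at hint
      have ihm : ∫ t : ℝ, t^j * ((Qp a m).eval t * Real.exp (-(a * t^2))) = 0 := by
        have := ih m hjm
        rwa [iteratedDeriv_gauss] at this
      rw [ihm, mul_zero, zero_add] at hint
      rw [iteratedDeriv_gauss]
      exact hint

/-- Orthogonality of `Qp a N` against all polynomials of degree `< N`
with respect to the weight `exp (-a t²)`. -/
lemma orth_poly (ha : 0 < a) (N : ℕ) (P : Polynomial ℝ) (hP : P.natDegree < N) :
    ∫ t : ℝ, P.eval t * ((Qp a N).eval t * Real.exp (-(a * t^2))) = 0 := by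
  have hrepr : ∀ t : ℝ, P.eval t * ((Qp a N).eval t * Real.exp (-(a * t^2)))
      = ∑ i ∈ Finset.range N, P.coeff i
          * (t^i * ((Qp a N).eval t * Real.exp (-(a * t^2)))) := by
    intro t
    rw [Polynomial.eval_eq_sum_range' hP, Finset.sum_mul]
    exact Finset.sum_congr rfl (fun i _ => by ring)
  simp_rw [hrepr]
  rw [integral_finset_sum _
    (fun i _ => (integrable_pow_mul_poly_gauss ha i _).const_mul _)]
  apply Finset.sum_eq_zero
  intro i hi
  rw [MeasureTheory.integral_const_mul]
  have := integral_pow_mul_iteratedDeriv_gauss ha i N (Finset.mem_range.mp hi)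
  rw [iteratedDeriv_gauss] at this
  simp only at this
  rw [this, mul_zero]
end Part3

noncomputable def Bc (β : ℝ) (N k : ℕ) : ℝ :=
  if k ≤ N ∧ (N - k) % 2 = 0 then
    (N ! : ℝ) / ((k ! : ℝ) * (((N - k) / 2)! : ℝ)) * β ^ ((N - k) / 2)
  else 0

lemma Bc_zero (β : ℝ) {N k : ℕ} (h : ¬(k ≤ N ∧ (N - k) % 2 = 0)) : Bc β N k = 0 :=
  if_neg h

lemma Bc_eval (β : ℝ) {N k m : ℕ} (h : k + 2*m = N) :
    Bc β N k = (N ! : ℝ) / ((k ! : ℝ) * (m ! : ℝ)) * β ^ m := by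
  have h1 : k ≤ N := by omega
  have h2 : N - k = 2*m := by omega
  rw [Bc, if_pos ⟨h1, by omega⟩, h2]
  have : 2 * m / 2 = m := by omega
  rw [this]

lemma Bc_self (β : ℝ) (N : ℕ) : Bc β N N = 1 := by
  rw [Bc_eval β (show N + 2*0 = N by omega)]
  have : ((N)! : ℝ) ≠ 0 := Nat.cast_ne_zero.mpr (Nat.factorial_ne_zero _)
  field_simp
  simp

lemma Bkey (β c a : ℝ) (ha : a ≠ 0) (hβ : β = c - c^2/a) (N j : ℕ) :
    Bc β (N+2) j = (if j = 0 then 0 else Bc β (N+1) (j-1))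
      + 2*c*((j:ℝ)+1) * Bc β (N+1) (j+1) - 2*c^2*((N:ℝ)+1)/a * Bc β N j := by
  have hsub : c - c^2/a = (c*a - c^2)/a := by field_simp
  subst hβ
  by_cases hA : N + 2 < j
  · rw [Bc_zero _ (by omega), Bc_zero _ (k := j - 1) (by omega),
      Bc_zero _ (k := j + 1) (by omega), Bc_zero _ (N := N) (k := j) (by omega),
      if_neg (by omega)]
    ring
  push_neg at hA
  by_cases hB : j = N + 2
  · subst hB
    rw [Bc_eval _ (show N+2 + 2*0 = N+2 by omega), if_neg (by omega)]
    have h1 : N + 2 - 1 = N + 1 := by omega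
    rw [h1, Bc_self, Bc_zero _ (k := N + 2 + 1) (by omega),
      Bc_zero _ (N := N) (k := N + 2) (by omega)]
    have : ((N+2)! : ℝ) ≠ 0 := Nat.cast_ne_zero.mpr (Nat.factorial_ne_zero _)
    field_simp
    simp
  by_cases hC : (N + 2 - j) % 2 = 1
  · have hz1 : Bc (c - c^2/a) (N+2) j = 0 := Bc_zero _ (by omega)
    have hz3 : Bc (c - c^2/a) (N+1) (j+1) = 0 := Bc_zero _ (by omega)
    have hz4 : Bc (c - c^2/a) N j = 0 := Bc_zero _ (by omega)
    rw [hz1, hz3, hz4]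
    rcases Nat.eq_zero_or_pos j with hj0 | hj0
    · rw [if_pos hj0]; ring
    · rw [if_neg (by omega), Bc_zero _ (k := j - 1) (by omega)]; ring
  · have hj : j ≤ N := by omega
    obtain ⟨m', hm⟩ : ∃ m', j + 2*(m'+1) = N + 2 := by
      have h2 : (N + 2 - j) % 2 = 0 := by omega
      exact ⟨(N - j)/2, by omega⟩
    obtain rfl : N = j + 2*m' := by omega
    rw [Bc_eval _ (show j + 2*(m'+1) = j + 2*m' + 2 by omega),
      Bc_eval _ (show (j+1) + 2*m' = j + 2*m' + 1 by omega),
      Bc_eval _ (show j + 2*m' = j + 2*m' by omega)]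
    have hfact : ∀ n : ℕ, ((n)! : ℝ) ≠ 0 :=
      fun n => Nat.cast_ne_zero.mpr (Nat.factorial_ne_zero _)
    have e1 : ((j + 2*m' + 2)! : ℝ) = ((j + 2*m' + 2):ℝ) * ((j + 2*m' + 1):ℝ)
        * ((j + 2*m')! : ℝ) := by
      rw [show j + 2*m' + 2 = (j + 2*m' + 1) + 1 from rfl, Nat.factorial_succ,
        Nat.factorial_succ]
      push_cast; ring
    have e2 : ((j + 2*m' + 1)! : ℝ) = ((j + 2*m' + 1):ℝ) * ((j + 2*m')! : ℝ) := by
      rw [Nat.factorial_succ]; push_cast; ring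
    have e3 : (((m'+1))! : ℝ) = ((m':ℝ)+1) * ((m')! : ℝ) := by
      rw [Nat.factorial_succ]; push_cast; ring
    have e4 : (((j+1))! : ℝ) = ((j:ℝ)+1) * ((j)! : ℝ) := by
      rw [Nat.factorial_succ]; push_cast; ring
    rcases Nat.eq_zero_or_pos j with hj0 | hj0
    · subst hj0
      rw [if_pos rfl]
      simp only [Nat.zero_add, zero_add] at e1 e2 e4 ⊢
      rw [e1, e2, e3]
      rw [hsub]
      simp only [div_pow]
      field_simp
      push_cast
      ring
    · obtain ⟨j', rfl⟩ : ∃ j', j = j' + 1 := ⟨j - 1, by omega⟩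
      rw [if_neg (by omega)]
      have h5 : j' + 1 - 1 = j' := by omega
      rw [h5, Bc_eval _ (show j' + 2*(m'+1) = j' + 1 + 2*m' + 1 by omega)]
      have e5 : ((j'+1)! : ℝ) = ((j':ℝ)+1) * ((j')! : ℝ) := by
        rw [Nat.factorial_succ]; push_cast; ring
      rw [e1, e2, e3, e4, e5]
      rw [hsub]
      simp only [div_pow]
      field_simp
      push_cast
      ring

noncomputable def Sp (c β : ℝ) (N : ℕ) : Polynomial ℝ :=
  ∑ k ∈ Finset.range (N+1), Polynomial.C (Bc β N k) * Qp c k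

lemma Sp_rec (c a β : ℝ) (ha : a ≠ 0) (hβ : β = c - c^2/a) (n : ℕ) :
    Sp c β (n+2) = Polynomial.C (-(2*c)) * Polynomial.X * Sp c β (n+1)
      - Polynomial.C (2*c^2*((n:ℝ)+1)/a) * Sp c β n := by
  have hmul : Polynomial.C (-(2*c)) * Polynomial.X * Sp c β (n+1)
      = ∑ k ∈ Finset.range (n+2), Polynomial.C (Bc β (n+1) k)
          * (Qp c (k+1) + Polynomial.C (2*c*k) * Qp c (k-1)) := by
    rw [Sp, Finset.mul_sum]
    refine Finset.sum_congr rfl (fun k _ => ?_)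
    rw [← Qp_mulX]
    ring
  have hA1 : ∑ k ∈ Finset.range (n+2), Polynomial.C (Bc β (n+1) k) * Qp c (k+1)
      = ∑ k ∈ Finset.range (n+3),
          (if k = 0 then 0 else Polynomial.C (Bc β (n+1) (k-1)) * Qp c k) := by
    rw [Finset.sum_range_succ'
      (fun k => if k = 0 then (0 : Polynomial ℝ)
        else Polynomial.C (Bc β (n+1) (k-1)) * Qp c k) (n+2)]
    simp
  have hA2 : ∑ k ∈ Finset.range (n+2),
        Polynomial.C (Bc β (n+1) k) * (Polynomial.C (2*c*k) * Qp c (k-1))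
      = ∑ k ∈ Finset.range (n+3),
          Polynomial.C (2*c*((k:ℝ)+1) * Bc β (n+1) (k+1)) * Qp c k := by
    rw [Finset.sum_range_succ'
      (fun k => Polynomial.C (Bc β (n+1) k) * (Polynomial.C (2*c*(k:ℝ)) * Qp c (k-1))) (n+1)]
    rw [Finset.sum_range_succ
      (fun k => Polynomial.C (2*c*((k:ℝ)+1) * Bc β (n+1) (k+1)) * Qp c k) (n+2)]
    rw [Finset.sum_range_succ
      (fun k => Polynomial.C (2*c*((k:ℝ)+1) * Bc β (n+1) (k+1)) * Qp c k) (n+1)]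
    rw [Bc_zero β (N := n+1) (k := n+1+1+1) (by omega),
      Bc_zero β (N := n+1) (k := n+1+1) (by omega)]
    simp only [Nat.cast_zero, mul_zero, map_zero, zero_mul, add_zero, mul_zero, zero_mul]
    refine Finset.sum_congr rfl (fun k _ => ?_)
    have h7 : (k : ℕ) + 1 - 1 = k := by omega
    rw [h7, ← mul_assoc, ← Polynomial.C_mul]
    congr 1
    push_cast
    ring
  have hA3 : Polynomial.C (2*c^2*((n:ℝ)+1)/a) * Sp c β n
      = ∑ k ∈ Finset.range (n+3),
          Polynomial.C (2*c^2*((n:ℝ)+1)/a * Bc β n k) * Qp c k := by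
    rw [Sp, Finset.mul_sum]
    rw [Finset.sum_range_succ
      (fun k => Polynomial.C (2*c^2*((n:ℝ)+1)/a * Bc β n k) * Qp c k) (n+2)]
    rw [Finset.sum_range_succ
      (fun k => Polynomial.C (2*c^2*((n:ℝ)+1)/a * Bc β n k) * Qp c k) (n+1)]
    rw [Bc_zero β (N := n) (k := n+2) (by omega), Bc_zero β (N := n) (k := n+1) (by omega)]
    simp only [mul_zero, map_zero, zero_mul, add_zero]
    refine Finset.sum_congr rfl (fun k _ => ?_)
    rw [Polynomial.C_mul]
    ring
  have hsplit : Polynomial.C (-(2*c)) * Polynomial.X * Sp c β (n+1)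
      = (∑ k ∈ Finset.range (n+2), Polynomial.C (Bc β (n+1) k) * Qp c (k+1))
        + ∑ k ∈ Finset.range (n+2),
            Polynomial.C (Bc β (n+1) k) * (Polynomial.C (2*c*k) * Qp c (k-1)) := by
    rw [hmul, ← Finset.sum_add_distrib]
    exact Finset.sum_congr rfl (fun k _ => by ring)
  rw [hsplit, hA1, hA2, hA3, ← Finset.sum_add_distrib, ← Finset.sum_sub_distrib]
  rw [Sp]
  refine Finset.sum_congr rfl (fun k _ => ?_)
  rw [Bkey β c a ha hβ n k]
  rcases Nat.eq_zero_or_pos k with hk0 | hk0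
  · subst hk0
    rw [if_pos rfl, if_pos rfl]
    simp only [Polynomial.C_add, Polynomial.C_sub, zero_add]
    ring
  · rw [if_neg (by omega), if_neg (by omega)]
    simp only [Polynomial.C_add, Polynomial.C_sub]
    ring

lemma Sp_eq (c a β : ℝ) (ha : a ≠ 0) (hβ : β = c - c^2/a) :
    ∀ N, Sp c β N = Polynomial.C ((c/a)^N) * Qp a N := by
  intro N
  induction N using Nat.twoStepInduction with
  | zero =>
    rw [Sp, Finset.sum_range_one, Bc_self, pow_zero]
    rw [show Qp c 0 = 1 from rfl, show Qp a 0 = 1 from rfl]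
  | one =>
    rw [Sp, Finset.sum_range_succ, Finset.sum_range_one]
    rw [Bc_self, Bc_zero β (N := 1) (k := 0) (by omega)]
    have h1 : Qp c 1 = -(Polynomial.C (2*c) * Polynomial.X) := by
      show Polynomial.derivative (Qp c 0) - _ = _
      rw [show Qp c 0 = 1 from rfl]
      simp
    have h2 : Qp a 1 = -(Polynomial.C (2*a) * Polynomial.X) := by
      show Polynomial.derivative (Qp a 0) - _ = _
      rw [show Qp a 0 = 1 from rfl]
      simp
    rw [h1, h2, pow_one]
    have e : Polynomial.C (c/a) * Polynomial.C (2*a) = Polynomial.C (2*c) := by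
      rw [← Polynomial.C_mul]
      congr 1
      field_simp
    simp only [map_zero, zero_mul, zero_add, map_one, one_mul]
    linear_combination (Polynomial.X : Polynomial ℝ) * e
  | more n ih1 ih2 =>
    rw [Sp_rec c a β ha hβ n, ih1, ih2, Qp_rec a n]
    have key1 : (c/a)^(n+2) * (-(2*a)) = -(2*c) * (c/a)^(n+1) := by
      rw [div_pow, div_pow]; field_simp; ring
    have key2 : (c/a)^(n+2) * (-(2*a)) * ((n:ℝ)+1) = -(2*c^2*((n:ℝ)+1)/a * (c/a)^n) := by
      rw [div_pow, div_pow]; field_simp; ring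
    have c1 : Polynomial.C ((c/a)^(n+2)) * Polynomial.C (-(2*a))
        = Polynomial.C (-(2*c)) * Polynomial.C ((c/a)^(n+1)) := by
      rw [← Polynomial.C_mul, ← Polynomial.C_mul, key1]
    have c2 : Polynomial.C ((c/a)^(n+2)) * Polynomial.C (-(2*a)) * Polynomial.C ((n:ℝ)+1)
        = -(Polynomial.C (2*c^2*((n:ℝ)+1)/a) * Polynomial.C ((c/a)^n)) := by
      rw [← Polynomial.C_mul, ← Polynomial.C_mul, ← Polynomial.C_mul, ← map_neg, key2]
    linear_combination (-(Polynomial.X * Qp a (n+1))) * c1 - (Qp a n) * c2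

lemma iteratedDeriv_gauss_complex (c : ℝ) (n : ℕ) :
    iteratedDeriv n (fun s : ℝ => ((Real.exp (-(c * s^2)) : ℝ) : ℂ))
      = fun t => (((Qp c n).eval t * Real.exp (-(c * t^2)) : ℝ) : ℂ) := by
  induction n with
  | zero =>
    funext t
    rw [iteratedDeriv_zero, show Qp c 0 = 1 from rfl]
    norm_num
  | succ n ih =>
    rw [iteratedDeriv_succ, ih]
    funext t
    have h := (hasDerivAt_poly_gauss c t (Qp c n)).ofReal_comp
    rw [show Polynomial.derivative (Qp c n) - Polynomial.C (2*c) * Polynomial.X * Qp c n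
      = Qp c (n+1) from rfl] at h
    exact h.deriv

lemma mul_ofReal_split (w : ℂ) (x : ℝ) :
    w * (x : ℂ) = ((w.re * x : ℝ) : ℂ) + ((w.im * x : ℝ) : ℂ) * Complex.I := by
  apply Complex.ext <;>
    simp [Complex.mul_re, Complex.mul_im, Complex.add_re, Complex.add_im]


/-- Real part polynomial of the linear combination. -/
noncomputable def PR (c : ℝ) (N : ℕ) (v : Fin N → ℂ) : Polynomial ℝ :=
  ∑ k ∈ Finset.range (N+1),
    Polynomial.C ((if h : k < N then v ⟨k,h⟩ else 1).re) * Qp c k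

/-- Imaginary part polynomial of the linear combination. -/
noncomputable def PI (c : ℝ) (N : ℕ) (v : Fin N → ℂ) : Polynomial ℝ :=
  ∑ k ∈ Finset.range (N+1),
    Polynomial.C ((if h : k < N then v ⟨k,h⟩ else 1).im) * Qp c k

lemma Frho_repr (σ ρ : ℝ) (hσ : 0 < σ) (hρ : 0 < ρ) (N : ℕ) (v : Fin N → ℂ) :
    Frho σ ρ N v = ∫ t : ℝ,
      ((PR ((2*σ)⁻¹) N v)^2 + (PI ((2*σ)⁻¹) N v)^2).eval t
        * Real.exp (-((2*(2*σ)⁻¹ + (2*ρ)⁻¹) * t^2)) := by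
  rw [Frho]
  congr 1
  funext t
  set c : ℝ := (2*σ)⁻¹ with hc
  have hfunC : (fun s : ℝ => ((Real.exp (-s ^ 2 / (2 * σ)) : ℝ) : ℂ))
      = fun s : ℝ => ((Real.exp (-(c * s^2)) : ℝ) : ℂ) := by
    funext s
    congr 2
    rw [hc]
    field_simp
  have hit : ∀ k, iteratedDeriv k (fun s : ℝ => ((Real.exp (-s ^ 2 / (2 * σ)) : ℝ) : ℂ)) t
      = (((Qp c k).eval t * Real.exp (-(c * t^2)) : ℝ) : ℂ) := by
    intro k
    rw [hfunC, iteratedDeriv_gauss_complex]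
  have hPR : ∑ k ∈ Finset.range (N+1),
        ((if h : k < N then v ⟨k,h⟩ else 1).re * ((Qp c k).eval t * Real.exp (-(c*t^2))))
      = (PR c N v).eval t * Real.exp (-(c*t^2)) := by
    rw [PR, Polynomial.eval_finset_sum, Finset.sum_mul]
    exact Finset.sum_congr rfl (fun k _ => by
      rw [Polynomial.eval_mul, Polynomial.eval_C]; ring)
  have hPI : ∑ k ∈ Finset.range (N+1),
        ((if h : k < N then v ⟨k,h⟩ else 1).im * ((Qp c k).eval t * Real.exp (-(c*t^2))))
      = (PI c N v).eval t * Real.exp (-(c*t^2)) := by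
    rw [PI, Polynomial.eval_finset_sum, Finset.sum_mul]
    exact Finset.sum_congr rfl (fun k _ => by
      rw [Polynomial.eval_mul, Polynomial.eval_C]; ring)
  have hsum : (∑ k ∈ Finset.range (N + 1),
        (if h : k < N then v ⟨k, h⟩ else 1) *
          (iteratedDeriv k (fun s : ℝ => ((Real.exp (-s ^ 2 / (2 * σ)) : ℝ) : ℂ)) t))
      = (((PR c N v).eval t * Real.exp (-(c*t^2)) : ℝ) : ℂ)
        + (((PI c N v).eval t * Real.exp (-(c*t^2)) : ℝ) : ℂ) * Complex.I := by
    calc (∑ k ∈ Finset.range (N + 1),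
          (if h : k < N then v ⟨k, h⟩ else 1) *
            (iteratedDeriv k (fun s : ℝ => ((Real.exp (-s ^ 2 / (2 * σ)) : ℝ) : ℂ)) t))
        = ∑ k ∈ Finset.range (N + 1),
            ((((if h : k < N then v ⟨k,h⟩ else 1).re
                * ((Qp c k).eval t * Real.exp (-(c*t^2))) : ℝ) : ℂ)
              + (((if h : k < N then v ⟨k,h⟩ else 1).im
                * ((Qp c k).eval t * Real.exp (-(c*t^2))) : ℝ) : ℂ) * Complex.I) := by
          refine Finset.sum_congr rfl (fun k _ => ?_)
          rw [hit k, mul_ofReal_split]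
      _ = _ := by
          rw [Finset.sum_add_distrib, ← Finset.sum_mul, ← Complex.ofReal_sum,
            ← Complex.ofReal_sum, hPR, hPI]
  rw [hsum, Complex.sq_norm, Complex.normSq_add_mul_I]
  have hE : (Real.exp (-(c*t^2)))^2 * Real.exp (-t^2/(2*ρ))
      = Real.exp (-((2*c + (2*ρ)⁻¹) * t^2)) := by
    rw [← Real.exp_nat_mul, ← Real.exp_add]
    congr 1
    have h2ρ : (2*ρ) ≠ 0 := by positivity
    field_simp
    ring
  rw [Polynomial.eval_add, Polynomial.eval_pow, Polynomial.eval_pow, ← hE]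
  ring

/-- the explicit vector `b` minimizes `F_ρ`. -/
theorem stmt0 (σ ρ : ℝ) (hσ : 0 < σ) (hρ : 0 < ρ) (N : ℕ) (hN : 1 ≤ N)
    (b : Fin N → ℂ) (hb : ∀ k : Fin N, b k = (bcoef σ ρ N k : ℂ)) :
    ∀ b' : Fin N → ℂ, Frho σ ρ N b ≤ Frho σ ρ N b' := by
  intro b'
  set c : ℝ := (2*σ)⁻¹ with hcdef
  set r : ℝ := (2*ρ)⁻¹ with hrdef
  set a : ℝ := 2*c + r with hadef
  have hc : 0 < c := by rw [hcdef]; positivity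
  have hr : 0 < r := by rw [hrdef]; positivity
  have ha : 0 < a := by rw [hadef]; positivity
  set β : ℝ := (ρ + σ) / (2 * σ * (2 * ρ + σ)) with hβdef
  have hβ : β = c - c^2/a := by
    rw [hβdef, hcdef, hadef, hcdef, hrdef]
    have h1 : (2*σ) ≠ 0 := by positivity
    have h2 : (2*ρ) ≠ 0 := by positivity
    have h3 : (2*ρ+σ) ≠ 0 := by positivity
    field_simp
    ring
  -- identify the polynomials for `b`
  have hPRb : PR c N b = Sp c β N := by
    rw [PR, Sp]
    refine Finset.sum_congr rfl (fun k hk => ?_)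
    congr 1
    by_cases h : k < N
    · rw [dif_pos h, hb ⟨k, h⟩, Complex.ofReal_re]
      rw [bcoef, Bc]
      by_cases hp : (N - k) % 2 = 0
      · rw [if_pos hp, if_pos ⟨le_of_lt h, hp⟩]
      · rw [if_neg hp, if_neg (by tauto)]
    · have hkN : k = N := by
        have := Finset.mem_range.mp hk; omega
      rw [dif_neg h, hkN, Bc_self, Complex.one_re]
  have hPIb : PI c N b = 0 := by
    rw [PI]
    refine Finset.sum_eq_zero (fun k hk => ?_)
    by_cases h : k < N
    · rw [dif_pos h, hb ⟨k, h⟩, Complex.ofReal_im, map_zero, zero_mul]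
    · rw [dif_neg h, Complex.one_im, map_zero, zero_mul]
  -- decomposition for b'
  set P1 : Polynomial ℝ := PR c N b' with hP1
  set P2 : Polynomial ℝ := PI c N b' with hP2
  set D : Polynomial ℝ := P1 - Sp c β N with hD
  have hDsum : D = ∑ k ∈ Finset.range N,
      Polynomial.C ((if h : k < N then b' ⟨k,h⟩ else 1).re - Bc β N k) * Qp c k := by
    rw [hD, hP1, PR, Sp, ← Finset.sum_sub_distrib]
    rw [Finset.sum_range_succ
      (fun k => Polynomial.C ((if h : k < N then b' ⟨k,h⟩ else 1).re) * Qp c k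
        - Polynomial.C (Bc β N k) * Qp c k) N]
    rw [dif_neg (lt_irrefl N), Bc_self, Complex.one_re, sub_self, add_zero]
    refine Finset.sum_congr rfl (fun k _ => ?_)
    rw [Polynomial.C_sub]
    ring
  have hDdeg : D.natDegree < N := by
    rw [hDsum]
    have hle : (∑ k ∈ Finset.range N,
        Polynomial.C ((if h : k < N then b' ⟨k,h⟩ else 1).re - Bc β N k) * Qp c k).natDegree
        ≤ N - 1 := by
      apply Polynomial.natDegree_sum_le_of_forall_le
      intro k hk
      refine le_trans (Polynomial.natDegree_C_mul_le _ _) ?_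
      refine le_trans (Qp_natDegree_le c k) ?_
      have := Finset.mem_range.mp hk; omega
    omega
  -- the cross term vanishes by orthogonality
  have hcross : ∫ t : ℝ, (Sp c β N * D).eval t * Real.exp (-(a * t^2)) = 0 := by
    have hpt : ∀ t : ℝ, (Sp c β N * D).eval t * Real.exp (-(a * t^2))
        = (c/a)^N * (D.eval t * ((Qp a N).eval t * Real.exp (-(a * t^2)))) := by
      intro t
      rw [Sp_eq c a β (ne_of_gt ha) hβ N]
      simp only [Polynomial.eval_mul, Polynomial.eval_C]
      ring
    simp_rw [hpt]
    rw [MeasureTheory.integral_const_mul, orth_poly ha N D hDdeg, mul_zero]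
  -- rewrite both functionals
  rw [Frho_repr σ ρ hσ hρ N b, Frho_repr σ ρ hσ hρ N b']
  rw [← hcdef, ← hrdef, ← hadef]
  rw [hPRb, hPIb, ← hP1, ← hP2]
  have hsplit : (P1^2 + P2^2 : Polynomial ℝ)
      = Sp c β N^2 + 2*(Sp c β N * D) + (D^2 + P2^2) := by
    rw [hD]; ring
  rw [hsplit]
  have hint1 : Integrable (fun t : ℝ => (Sp c β N^2).eval t * Real.exp (-(a * t^2))) :=
    integrable_poly_gauss ha _
  have hint2 : Integrable (fun t : ℝ => (2*(Sp c β N * D)).eval t * Real.exp (-(a * t^2))) :=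
    integrable_poly_gauss ha _
  have hint3 : Integrable (fun t : ℝ => ((D^2 + P2^2 : Polynomial ℝ)).eval t
      * Real.exp (-(a * t^2))) := integrable_poly_gauss ha _
  have heq : (fun t : ℝ => ((Sp c β N^2 + 2*(Sp c β N * D) + (D^2 + P2^2)).eval t)
        * Real.exp (-(a * t^2)))
      = fun t : ℝ => (Sp c β N^2).eval t * Real.exp (-(a * t^2))
          + ((2*(Sp c β N * D)).eval t * Real.exp (-(a * t^2))
            + ((D^2 + P2^2 : Polynomial ℝ)).eval t * Real.exp (-(a * t^2))) := by
    funext t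
    simp only [Polynomial.eval_add]
    ring
  have hint23 : Integrable (fun t : ℝ => (2*(Sp c β N * D)).eval t * Real.exp (-(a * t^2))
      + ((D^2 + P2^2 : Polynomial ℝ)).eval t * Real.exp (-(a * t^2))) := hint2.add hint3
  rw [heq, MeasureTheory.integral_add hint1 hint23,
    MeasureTheory.integral_add hint2 hint3]
  have hzero : ∫ t : ℝ, (2*(Sp c β N * D)).eval t * Real.exp (-(a * t^2)) = 0 := by
    have : (fun t : ℝ => (2*(Sp c β N * D)).eval t * Real.exp (-(a * t^2)))
        = fun t : ℝ => 2 * ((Sp c β N * D).eval t * Real.exp (-(a * t^2))) := by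
      funext t
      simp only [Polynomial.eval_mul, Polynomial.eval_ofNat]
      ring
    rw [this, MeasureTheory.integral_const_mul, hcross, mul_zero]
  have hnonneg : 0 ≤ ∫ t : ℝ, ((D^2 + P2^2 : Polynomial ℝ)).eval t
      * Real.exp (-(a * t^2)) := by
    apply MeasureTheory.integral_nonneg
    intro t
    simp only [Polynomial.eval_add, Polynomial.eval_pow, Pi.zero_apply]
    positivity
  have hzeropoly : ((0:Polynomial ℝ)^2 : Polynomial ℝ) = 0 := by ring
  rw [hzeropoly, add_zero]
  linarith
end

section
/- For every N ∈ ℕ and every x ∈ ℝ, e^{-x²} |H_{2N}(x)| ≤ (2N)!/N!, and equality holds at x = 0; that is, the global maximum of e^{-x²}|H_{2N}(x)| over ℝ is attained at x = 0 with value |H_{2N}(0)| = (2N)!/N!. -/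
open Real MeasureTheory Finset Nat

section Aux

open Complex FourierTransform Polynomial

noncomputable def gg : ℝ → ℂ := fun ξ => (Real.sqrt π : ℂ) * Complex.exp (-(π:ℂ)^2 * ξ^2)

lemma gg_ofReal (x : ℝ) : gg x = ((Real.sqrt π * Real.exp (-(π^2) * x^2) : ℝ) : ℂ) := by
  unfold gg
  push_cast [Complex.ofReal_exp]
  ring_nf

lemma gauss_integrable {b : ℝ} (hb : 0 < b) (n : ℕ) :
    Integrable (fun x : ℝ => x ^ n * Real.exp (-b * x ^ 2)) := by
  simpa [Real.rpow_natCast] using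
    integrable_rpow_mul_exp_neg_mul_sq hb (s := n)
      (lt_of_lt_of_le neg_one_lt_zero (by positivity))

lemma gg_int (n : ℕ) : Integrable (fun x : ℝ => x ^ n • gg x) := by
  have h : (fun x : ℝ => x ^ n • gg x)
      = fun x : ℝ => ((Real.sqrt π * (x ^ n * Real.exp (-(π^2) * x^2)) : ℝ) : ℂ) := by
    funext x
    rw [gg_ofReal, Complex.real_smul]
    push_cast
    ring
  rw [h]
  exact (((gauss_integrable (by positivity) n)).const_mul _).ofReal

lemma sqrt_pi_eq : ((Real.sqrt π : ℝ) : ℂ) = (π:ℂ) ^ (1/2 : ℂ) := by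
  rw [Real.sqrt_eq_rpow, Complex.ofReal_cpow Real.pi_pos.le]
  norm_num

lemma fourier_gg : 𝓕 gg = fun t : ℝ => ((Real.exp (-t^2) : ℝ) : ℂ) := by
  have h := fourier_gaussian_pi (b := (π:ℂ)) (by simpa using Real.pi_pos)
  have h2 : (fun x : ℝ => Complex.exp (-(π:ℂ) * π * (x:ℂ)^2))
      = fun x : ℝ => Complex.exp (-(π:ℂ)^2 * (x:ℂ)^2) := by
    funext x; ring_nf
  rw [h2] at h
  have hsmul : gg = (Real.sqrt π : ℂ) • (fun x : ℝ => Complex.exp (-(π:ℂ)^2 * (x:ℂ)^2)) := rfl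
  funext t
  rw [hsmul]
  rw [show 𝓕 ((Real.sqrt π : ℂ) • fun x : ℝ => Complex.exp (-(π:ℂ)^2 * (x:ℂ)^2))
      = (Real.sqrt π : ℂ) • 𝓕 (fun x : ℝ => Complex.exp (-(π:ℂ)^2 * (x:ℂ)^2)) from
    VectorFourier.fourierIntegral_const_smul _ _ _ _ _]
  rw [Pi.smul_apply, h, smul_eq_mul, sqrt_pi_eq]
  have hne : ((Real.sqrt π : ℝ) : ℂ) ≠ 0 := by
    simpa using (Real.sqrt_pos.mpr Real.pi_pos).ne'
  rw [← sqrt_pi_eq]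
  have hpi : -(π:ℂ) / π = -1 := by
    rw [neg_div, div_self (by exact_mod_cast Real.pi_pos.ne')]
  simp only [hpi]
  field_simp
  simp [Complex.ofReal_exp]

lemma keyId (n : ℕ) : iteratedDeriv n (fun t : ℝ => ((Real.exp (-t^2):ℝ):ℂ))
    = 𝓕 (fun x : ℝ => ((-2 * π * Complex.I * x)^n : ℂ) • gg x) := by
  rw [← fourier_gg]
  exact Real.iteratedDeriv_fourier (N := (⊤:ℕ∞)) (f := gg) (fun n _ => gg_int n) le_top

noncomputable def rr (N : ℕ) : ℝ → ℝ :=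
  fun v => ((2*π*v)^2)^N * (Real.sqrt π * Real.exp (-(π^2) * v^2))

lemma hh_eq (N : ℕ) (v : ℝ) :
    ((-2 * π * Complex.I * v)^(2*N) : ℂ) • gg v = (-1:ℂ)^N • ((rr N v : ℝ) : ℂ) := by
  have h1 : (-2 * (π:ℂ) * Complex.I * v)^(2*N) = (-1:ℂ)^N * (((2*π*v : ℂ))^2)^N := by
    rw [show (-2 * (π:ℂ) * Complex.I * v) = (2 * π * v) * (-Complex.I) by ring, mul_pow,
      pow_mul (2 * (π:ℂ) * v), pow_mul (-Complex.I),
      show ((-Complex.I)^2 = -1) by simp [pow_two]]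
    ring
  rw [smul_eq_mul, smul_eq_mul, h1, gg_ofReal]
  unfold rr
  push_cast
  ring

lemma norm_hh (N : ℕ) (v : ℝ) :
    ‖((-2 * π * Complex.I * v)^(2*N) : ℂ) • gg v‖ = rr N v := by
  rw [hh_eq, norm_smul]
  have h2 : (0:ℝ) ≤ rr N v := by
    unfold rr
    positivity
  simp [_root_.abs_of_nonneg h2]

lemma F_hh_zero (N : ℕ) :
    ‖𝓕 (fun x : ℝ => ((-2 * π * Complex.I * x)^(2*N) : ℂ) • gg x) 0‖
      = ∫ ξ : ℝ, ‖((-2 * π * Complex.I * ξ)^(2*N) : ℂ) • gg ξ‖ := by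
  rw [Real.fourier_real_eq_integral_exp_smul]
  simp only [mul_zero, Complex.ofReal_zero, zero_mul, Complex.exp_zero, one_smul]
  simp only [hh_eq, norm_hh]
  rw [integral_smul,
    show (∫ a : ℝ, ((rr N a : ℝ) : ℂ)) = (((∫ a : ℝ, rr N a) : ℝ) : ℂ) from integral_ofReal,
    norm_smul]
  have hnn : 0 ≤ ∫ ξ : ℝ, rr N ξ := integral_nonneg (fun ξ => by unfold rr; positivity)
  simp only [norm_pow, norm_neg, norm_one, one_pow, one_mul, Complex.norm_real,
    Real.norm_eq_abs, _root_.abs_of_nonneg hnn]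
  congr 1
  funext ξ
  rw [norm_smul]
  simp [_root_.abs_of_nonneg (show (0:ℝ) ≤ rr N ξ by unfold rr; positivity)]

lemma main_ineq (N : ℕ) (x : ℝ) :
    ‖iteratedDeriv (2*N) (fun t : ℝ => ((Real.exp (-t^2):ℝ):ℂ)) x‖
    ≤ ‖iteratedDeriv (2*N) (fun t : ℝ => ((Real.exp (-t^2):ℝ):ℂ)) 0‖ := by
  rw [keyId, F_hh_zero]
  exact VectorFourier.norm_fourierIntegral_le_integral_norm _ _ _ _ _

lemma contDiff_gauss : ContDiff ℝ ⊤ (fun s : ℝ => Real.exp (-s ^ 2)) :=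
  Real.contDiff_exp.comp (contDiff_id.pow 2).neg

lemma iteratedDeriv_ofReal (f : ℝ → ℝ) (hf : ContDiff ℝ ⊤ f) (n : ℕ) :
    iteratedDeriv n (fun t => ((f t : ℝ) : ℂ)) = fun x => ((iteratedDeriv n f x : ℝ) : ℂ) := by
  induction n with
  | zero => simp [iteratedDeriv_zero]
  | succ n ih =>
    funext x
    rw [iteratedDeriv_succ, ih, iteratedDeriv_succ]
    exact (((hf.differentiable_iteratedDeriv n
      (lt_top_iff_ne_top.mpr (by simp))) x).hasDerivAt.ofReal_comp).deriv

lemma contDiff_gauss2 : ContDiff ℝ ⊤ (fun y : ℝ => Real.exp (-(y ^ 2 / 2))) :=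
  Real.contDiff_exp.comp ((contDiff_id.pow 2).div_const 2).neg

lemma db_fact (N : ℕ) : (2*N)! = 2^N * N ! * (2*N-1)‼ := by
  cases N with
  | zero => simp
  | succ n =>
    have h : (2 * (n+1)) = (2*n+1) + 1 := by ring
    rw [h, Nat.factorial_eq_mul_doubleFactorial]
    rw [show (2*n+1+1) = 2*(n+1) by ring, Nat.doubleFactorial_two_mul]
    rw [show 2*(n+1)-1 = 2*n+1 by omega]

lemma iD_zero (N : ℕ) :
    |iteratedDeriv (2*N) (fun s : ℝ => Real.exp (-s ^ 2)) 0| = ((2*N)! : ℝ) / (N ! : ℝ) := by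
  have hcomp : (fun s : ℝ => Real.exp (-s ^ 2))
      = fun s : ℝ => (fun y : ℝ => Real.exp (-(y ^ 2 / 2))) (Real.sqrt 2 * s) := by
    funext s
    simp only []
    rw [mul_pow, Real.sq_sqrt (by norm_num : (0:ℝ) ≤ 2)]
    ring_nf
  rw [hcomp, iteratedDeriv_comp_const_mul (contDiff_gauss2.of_le le_top) (Real.sqrt 2)]
  simp only [mul_zero]
  rw [show iteratedDeriv (2*N) (fun y : ℝ => Real.exp (-(y ^ 2 / 2))) 0
      = deriv^[2*N] (fun y : ℝ => Real.exp (-(y ^ 2 / 2))) 0 from by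
        rw [iteratedDeriv_eq_iterate],
    Polynomial.deriv_gaussian_eq_hermite_mul_gaussian]
  have hc : (Polynomial.hermite (2*N)).coeff 0 = (-1:ℤ)^N * (2*N-1)‼ := by
    simpa using Polynomial.coeff_hermite_explicit N 0
  have haev : (Polynomial.aeval (0:ℝ)) (Polynomial.hermite (2*N)) = ((-1:ℝ))^N * (2*N-1)‼ := by
    rw [Polynomial.aeval_def, Polynomial.eval₂_at_zero, hc]
    push_cast
    ring
  rw [haev]
  rw [show (-((0:ℝ)^2/2)) = 0 by norm_num, Real.exp_zero, mul_one]
  rw [_root_.abs_mul, _root_.abs_mul, _root_.abs_mul, _root_.abs_pow, _root_.abs_pow,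
    _root_.abs_pow, abs_neg, abs_one, one_pow, one_mul, one_pow, one_mul, Nat.abs_cast,
    _root_.abs_of_nonneg (Real.sqrt_nonneg 2), pow_mul, Real.sq_sqrt (by norm_num : (0:ℝ) ≤ 2)]
  rw [db_fact N]
  push_cast
  have hN : (N ! : ℝ) ≠ 0 := by positivity
  field_simp

lemma main_ineq' (N : ℕ) (x : ℝ) :
    |iteratedDeriv (2*N) (fun s : ℝ => Real.exp (-s ^ 2)) x|
    ≤ |iteratedDeriv (2*N) (fun s : ℝ => Real.exp (-s ^ 2)) 0| := by
  have h := main_ineq N x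
  rw [iteratedDeriv_ofReal _ contDiff_gauss] at h
  simpa using h

end Aux

/-- the global maximum of `e^{-x²}|H_{2N}(x)|` over ℝ is attained at
`x = 0` with value `|H_{2N}(0)| = (2N)!/N!`. -/
theorem stmt9 (N : ℕ) :
    (∀ x : ℝ, Real.exp (-x ^ 2) * |hermiteH (2 * N) x| ≤ ((2 * N)! : ℝ) / (N ! : ℝ)) ∧
    |hermiteH (2 * N) 0| = ((2 * N)! : ℝ) / (N ! : ℝ) := by
  have hzero : |hermiteH (2 * N) 0| = ((2 * N)! : ℝ) / (N ! : ℝ) := by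
    unfold hermiteH
    rw [_root_.abs_mul, _root_.abs_mul]
    rw [show ((0:ℝ)^2) = 0 by norm_num, Real.exp_zero, _root_.abs_pow, abs_neg, abs_one,
      one_pow, one_mul, one_mul]
    exact iD_zero N
  refine ⟨fun x => ?_, hzero⟩
  have hw : Real.exp (-x ^ 2) * |hermiteH (2 * N) x|
      = |iteratedDeriv (2*N) (fun s : ℝ => Real.exp (-s ^ 2)) x| := by
    unfold hermiteH
    rw [_root_.abs_mul, _root_.abs_mul, _root_.abs_pow, abs_neg, abs_one, one_pow, one_mul,
      _root_.abs_of_nonneg (Real.exp_pos _).le, ← mul_assoc, ← Real.exp_add]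
    rw [show (-x^2 + x^2) = 0 by ring, Real.exp_zero, one_mul]
  rw [hw, ← iD_zero N]
  exact main_ineq' N x
end
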